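/- arXiv:1611.09104 — 2 statements merged into one kernel-verified Lean document; each statement's English description precedes it below -/
import Mathlib

section
/- Let A₁ and A₂ be regular edge sets in a finite directed acyclic graph with source s such that A₁ ≺ A₂. Then for any minimum cut CUT₁ between s and A₁ and any minimum cut CUT₁₂ between s and A₁ ∪ A₂, it holds that CUT₁ ≺ CUT₁₂. -/
open Finset

/-- Consecutive edges in the list match head-to-tail. -/
def EChain {V E : Type*} (tl hd : E → V) (p : List E) : Prop :=
  p.Chain' (fun d e => hd d = tl e)

/-- A (nonempty) directed path of edges starting at node `s`. -/
def PathFrom {V E : Type*} (tl hd : E → V) (s : V) (p : List E) : Prop :=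
  p ≠ [] ∧ EChain tl hd p ∧ ∀ e ∈ p.head?, tl e = s

/-- The directed graph is acyclic: no nonempty edge-chain returns to its start. -/
def Acyclic {V E : Type*} (tl hd : E → V) : Prop :=
  ∀ p : List E, p ≠ [] → EChain tl hd p →
    ∀ d ∈ p.head?, ∀ e ∈ p.getLast?, hd e ≠ tl d

/-- `B` separates the edge set `A` from `s`: every directed path from `s`
ending with an edge of `A` passes through an edge of `B` (i.e. `B` is a cut
between `s` and `A`). -/
def Separates {V E : Type*} (tl hd : E → V) (s : V) (A B : Finset E) : Prop :=
  ∀ p : List E, PathFrom tl hd s p → (∃ e ∈ p.getLast?, e ∈ A) → ∃ b ∈ B, b ∈ p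

/-- The minimum cut capacity between `s` and the edge set `A`. -/
noncomputable def mincut {V E : Type*} [Fintype E] (tl hd : E → V) (s : V)
    (A : Finset E) : ℕ :=
  sInf {n | ∃ B : Finset E, Separates tl hd s A B ∧ B.card = n}

/-- `B` is a minimum cut between `s` and the edge set `A`. -/
def IsMinCut {V E : Type*} [Fintype E] (tl hd : E → V) (s : V) (A B : Finset E) : Prop :=
  Separates tl hd s A B ∧ B.card = mincut tl hd s A

/-- An edge set is regular if its cardinality equals its minimum cut capacity from `s`. -/
def Regular {V E : Type*} [Fintype E] (tl hd : E → V) (s : V) (A : Finset E) : Prop :=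
  A.card = mincut tl hd s A

/-- `A ∼ A'`: the two edge sets have a common minimum cut from `s`. -/
def EquivSets {V E : Type*} [Fintype E] (tl hd : E → V) (s : V) (A A' : Finset E) : Prop :=
  ∃ C : Finset E, IsMinCut tl hd s A C ∧ IsMinCut tl hd s A' C

/-- `A₁ ≺ A₂`: `|A₁| < |A₂|` and some minimum cut between `s` and `A₂`
also separates `A₁` from `s`. -/
def Dominates {V E : Type*} [Fintype E] (tl hd : E → V) (s : V) (A₁ A₂ : Finset E) : Prop :=
  A₁.card < A₂.card ∧
    ∃ C : Finset E, IsMinCut tl hd s A₂ C ∧ Separates tl hd s A₁ C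

/-- A directed path of edges from node `s` to node `t`. -/
def NPathFromTo {V E : Type*} (tl hd : E → V) (s t : V) (p : List E) : Prop :=
  PathFrom tl hd s p ∧ ∀ e ∈ p.getLast?, hd e = t

/-- `B` is a cut between the nodes `s` and `t`. -/
def NSeparates {V E : Type*} (tl hd : E → V) (s t : V) (B : Finset E) : Prop :=
  ∀ p : List E, NPathFromTo tl hd s t p → ∃ b ∈ B, b ∈ p

/-- The minimum cut capacity between the nodes `s` and `t`. -/
noncomputable def nmincut {V E : Type*} [Fintype E] (tl hd : E → V) (s t : V) : ℕ :=
  sInf {n | ∃ B : Finset E, NSeparates tl hd s t B ∧ B.card = n}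

/-- `B` is a minimum cut between the nodes `s` and `t`. -/
def IsNodeMinCut {V E : Type*} [Fintype E] (tl hd : E → V) (s t : V) (B : Finset E) : Prop :=
  NSeparates tl hd s t B ∧ B.card = nmincut tl hd s t

/-- `d ≤ e` for edges: there is a directed path starting with `d` and ending with `e`
(in particular `d ≤ d`). -/
def EdgeLe {V E : Type*} (tl hd : E → V) (d e : E) : Prop :=
  ∃ p : List E, EChain tl hd p ∧ p.head? = some d ∧ p.getLast? = some e

/-- A family of pairwise edge-disjoint paths. -/
def EdgeDisjoint {E : Type*} {n : ℕ} (P : Fin n → List E) : Prop :=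
  ∀ i j, i ≠ j → List.Disjoint (P i) (P j)

/-- The primary minimum cut between nodes `s` and `t`: a minimum cut separating
every minimum cut between `s` and `t` from `s`. -/
def IsPrimaryNodeMinCut {V E : Type*} [Fintype E] (tl hd : E → V) (s t : V)
    (C : Finset E) : Prop :=
  IsNodeMinCut tl hd s t C ∧
    ∀ C' : Finset E, IsNodeMinCut tl hd s t C' → Separates tl hd s C' C

/-- The primary minimum cut between `s` and an edge set `A`. -/
def IsPrimaryMinCut {V E : Type*} [Fintype E] (tl hd : E → V) (s : V)
    (A C : Finset E) : Prop :=
  IsMinCut tl hd s A C ∧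
    ∀ C' : Finset E, IsMinCut tl hd s A C' → Separates tl hd s C' C

/-- The equivalence class (within the collection `𝒜`) of the wiretap set `A`
under the relation `∼`. -/
def ClassOf {V E : Type*} [Fintype E] (tl hd : E → V) (s : V)
    (𝒜 : Finset (Finset E)) (A : Finset E) : Set (Finset E) :=
  {A' | A' ∈ 𝒜 ∧ EquivSets tl hd s A A'}

/-- Domination amongst (distinct) equivalence classes: some common minimum cut of all
the sets in `C₂` separates every set in `C₁` from `s`. -/
def ClDominates {V E : Type*} [Fintype E] (tl hd : E → V) (s : V)
    (C₁ C₂ : Set (Finset E)) : Prop :=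
  C₁ ≠ C₂ ∧ ∃ CUT : Finset E,
    (∀ A ∈ C₂, IsMinCut tl hd s A CUT) ∧ (∀ A ∈ C₁, Separates tl hd s A CUT)


/-!
Only the size condition of `A₁ ≺ A₂` is needed:
`|CUT₁| = |A₁| < |A₂| ≤ mincut(A₁ ∪ A₂) = |CUT₁₂|`. For the cut, uncross `CUT₁` and `CUT₁₂`.
The edges leaving the region reachable from `s` avoiding both cuts form a cut `D` of both, the
edges leaving the region reachable avoiding one of them form a cut `U` of `A₁`, and
`|D| + |U| ≤ |CUT₁| + |CUT₁₂|`. As `|U| ≥ |CUT₁|`, this gives `|D| ≤ |CUT₁₂|`; and `CUT₁₂` is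
regular (a cut of it is a cut of `A₁ ∪ A₂`), so `D` is a minimum cut of `CUT₁₂`.
-/

section Cuts

variable {V E : Type*} {tl hd : E → V} {s : V}

lemma PathFrom.singleton {e : E} (h : tl e = s) : PathFrom tl hd s [e] :=
  ⟨List.cons_ne_nil _ _, List.isChain_singleton e, by simpa using h⟩

lemma PathFrom.concat {p : List E} (hp : PathFrom tl hd s p) {d e : E}
    (hlast : p.getLast? = some d) (hde : hd d = tl e) : PathFrom tl hd s (p ++ [e]) := by
  obtain ⟨hne, hchain, hhead⟩ := hp
  refine ⟨by simp, List.isChain_append.2 ⟨hchain, List.isChain_singleton e, ?_⟩, ?_⟩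
  · intro x hx y hy
    simp_all
  · obtain ⟨a, t, rfl⟩ := List.exists_cons_of_ne_nil hne
    simpa using hhead

lemma PathFrom.prefix {q r : List E} {b : E} (hp : PathFrom tl hd s (q ++ b :: r)) :
    PathFrom tl hd s (q ++ [b]) := by
  have hchain : EChain tl hd ((q ++ [b]) ++ r) := by simpa using hp.2.1
  refine ⟨by simp, hchain.left_of_append, fun x hx => hp.2.2 x ?_⟩
  cases q <;> simpa using hx

lemma separates_self (A : Finset E) : Separates tl hd s A A := by
  rintro p - ⟨a, ha, haA⟩
  exact ⟨a, haA, List.mem_of_mem_getLast? ha⟩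

lemma Separates.mono_left {A A' B : Finset E} (h : Separates tl hd s A' B) (hA : A ⊆ A') :
    Separates tl hd s A B := by
  rintro p hp ⟨a, ha, haA⟩
  exact h p hp ⟨a, ha, hA haA⟩

lemma Separates.trans {A B X : Finset E} (hAB : Separates tl hd s A B)
    (hBX : Separates tl hd s B X) : Separates tl hd s A X := by
  rintro p hp hlast
  obtain ⟨b, hbB, hbp⟩ := hAB p hp hlast
  obtain ⟨q, r, rfl⟩ := List.append_of_mem hbp
  obtain ⟨x, hxX, hxqb⟩ := hBX _ hp.prefix ⟨b, List.getLast?_concat, hbB⟩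
  exact ⟨x, hxX, by simpa using (List.prefix_append (q ++ [b]) r).subset hxqb⟩

section Separation

variable [Fintype E]

lemma mincut_le_card {A B : Finset E} (h : Separates tl hd s A B) :
    mincut tl hd s A ≤ B.card :=
  Nat.sInf_le ⟨B, h, rfl⟩

lemma le_mincut {A : Finset E} {k : ℕ} (h : ∀ B, Separates tl hd s A B → k ≤ B.card) :
    k ≤ mincut tl hd s A :=
  le_csInf ⟨A.card, A, separates_self A, rfl⟩ (by rintro n ⟨B, hB, rfl⟩; exact h B hB)

lemma mincut_mono {A A' : Finset E} (hA : A ⊆ A') : mincut tl hd s A ≤ mincut tl hd s A' :=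
  le_mincut fun _ hB => mincut_le_card (hB.mono_left hA)

lemma IsMinCut.regular {A C : Finset E} (h : IsMinCut tl hd s A C) : Regular tl hd s C :=
  le_antisymm (le_mincut fun _ hX => h.2 ▸ mincut_le_card (h.1.trans hX))
    (mincut_le_card (separates_self C))

end Separation

def ReachableAvoiding (tl hd : E → V) (s : V) (F : Finset E) (e : E) : Prop :=
  ∃ p : List E, PathFrom tl hd s p ∧ p.getLast? = some e ∧ ∀ x ∈ p, x ∉ F

lemma ReachableAvoiding.anti {F F' : Finset E} (hF : F ⊆ F') {e : E}
    (h : ReachableAvoiding tl hd s F' e) : ReachableAvoiding tl hd s F e := by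
  obtain ⟨p, hp, hl, hav⟩ := h
  exact ⟨p, hp, hl, fun x hx hxF => hav x hx (hF hxF)⟩

lemma not_reachableAvoiding_of_separates {A F : Finset E} (h : Separates tl hd s A F) {a : E}
    (ha : a ∈ A) : ¬ ReachableAvoiding tl hd s F a := by
  rintro ⟨p, hp, hl, hav⟩
  obtain ⟨b, hbF, hbp⟩ := h p hp ⟨a, hl, ha⟩
  exact hav b hbp hbF

def StartsFrom (tl hd : E → V) (s : V) (G : E → Prop) (e : E) : Prop :=
  tl e = s ∨ ∃ d, G d ∧ hd d = tl e

lemma StartsFrom.mono {G G' : E → Prop} (hG : ∀ e, G e → G' e) {e : E}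
    (h : StartsFrom tl hd s G e) : StartsFrom tl hd s G' e :=
  h.imp_right fun ⟨d, hd', hde⟩ => ⟨d, hG d hd', hde⟩

lemma mem_of_startsFrom_of_not_reachableAvoiding {F : Finset E} {e : E}
    (hstart : StartsFrom tl hd s (ReachableAvoiding tl hd s F) e)
    (hne : ¬ ReachableAvoiding tl hd s F e) : e ∈ F := by
  by_contra heF
  apply hne
  rcases hstart with h | ⟨d, ⟨p, hp, hl, hav⟩, hde⟩
  · exact ⟨[e], .singleton h, rfl, by simpa using heF⟩
  · refine ⟨p ++ [e], hp.concat hl hde, List.getLast?_concat, ?_⟩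
    simpa [or_imp, forall_and] using ⟨hav, heF⟩

section Frontier

variable [Fintype E]

open Classical in
noncomputable def edgeFrontier (tl hd : E → V) (s : V) (G : E → Prop) : Finset E :=
  univ.filter fun e => ¬ G e ∧ StartsFrom tl hd s G e

lemma mem_edgeFrontier {G : E → Prop} {e : E} :
    e ∈ edgeFrontier tl hd s G ↔ ¬ G e ∧ StartsFrom tl hd s G e := by
  classical
  simp [edgeFrontier]

lemma exists_mem_edgeFrontier_of_echain (G : E → Prop) :
    ∀ (p : List E) (v : V), EChain tl hd p → (∀ e ∈ p.head?, tl e = v) →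
      (v = s ∨ ∃ d, G d ∧ hd d = v) → (∃ x ∈ p, ¬ G x) → ∃ e ∈ edgeFrontier tl hd s G, e ∈ p
  | [], _, _, _, _, ⟨_, hx, _⟩ => absurd hx List.not_mem_nil
  | a :: t, v, hchain, hhead, hv, ⟨x, hx, hGx⟩ => by
    have hta : tl a = v := hhead a rfl
    by_cases hGa : G a
    · have hxt : x ∈ t := (List.mem_cons.1 hx).resolve_left (by rintro rfl; exact hGx hGa)
      have hhead' : ∀ e ∈ t.head?, tl e = hd a := by
        cases t with
        | nil => simp
        | cons b t' => simpa using ((List.isChain_cons_cons).1 hchain).1.symm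
      obtain ⟨e, hfr, he⟩ :=
        exists_mem_edgeFrontier_of_echain G t (hd a) hchain.tail hhead' (.inr ⟨a, hGa, rfl⟩)
          ⟨x, hxt, hGx⟩
      exact ⟨e, hfr, List.mem_cons_of_mem _ he⟩
    · exact ⟨a, mem_edgeFrontier.2 ⟨hGa, by rwa [StartsFrom, hta]⟩, List.mem_cons_self⟩

lemma separates_edgeFrontier {G : E → Prop} {A : Finset E} (hA : ∀ a ∈ A, ¬ G a) :
    Separates tl hd s A (edgeFrontier tl hd s G) := by
  rintro p hp ⟨a, ha, haA⟩
  exact exists_mem_edgeFrontier_of_echain G p s hp.2.1 hp.2.2 (.inl rfl)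
    ⟨a, List.mem_of_mem_getLast? ha, hA a haA⟩

lemma edgeFrontier_reachableAvoiding_subset (F : Finset E) :
    edgeFrontier tl hd s (ReachableAvoiding tl hd s F) ⊆ F := fun _ he =>
  have he := mem_edgeFrontier.1 he
  mem_of_startsFrom_of_not_reachableAvoiding he.2 he.1

noncomputable def upperUncrossing (tl hd : E → V) (s : V) (X Y : Finset E) : Finset E :=
  edgeFrontier tl hd s fun e => ReachableAvoiding tl hd s X e ∨ ReachableAvoiding tl hd s Y e

lemma Separates.upperUncrossing {A X Y : Finset E} (hX : Separates tl hd s A X)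
    (hY : Separates tl hd s A Y) : Separates tl hd s A (upperUncrossing tl hd s X Y) :=
  separates_edgeFrontier fun _ ha h =>
    h.elim (not_reachableAvoiding_of_separates hX ha) (not_reachableAvoiding_of_separates hY ha)

variable [DecidableEq E]

lemma upperUncrossing_subset (X Y : Finset E) : upperUncrossing tl hd s X Y ⊆ X ∪ Y := by
  intro e he
  obtain ⟨hnot, hstart⟩ := mem_edgeFrontier.1 he
  push Not at hnot
  rcases hstart with h | ⟨d, hd' | hd', hde⟩
  · exact mem_union_left _ (mem_of_startsFrom_of_not_reachableAvoiding (.inl h) hnot.1)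
  · exact mem_union_left _
      (mem_of_startsFrom_of_not_reachableAvoiding (.inr ⟨d, hd', hde⟩) hnot.1)
  · exact mem_union_right _
      (mem_of_startsFrom_of_not_reachableAvoiding (.inr ⟨d, hd', hde⟩) hnot.2)

noncomputable def lowerUncrossing (tl hd : E → V) (s : V) (X Y : Finset E) : Finset E :=
  edgeFrontier tl hd s (ReachableAvoiding tl hd s (X ∪ Y))

lemma separates_lowerUncrossing_left (X Y : Finset E) :
    Separates tl hd s X (lowerUncrossing tl hd s X Y) :=
  separates_edgeFrontier fun _ ha =>
    not_reachableAvoiding_of_separates (separates_self _) (mem_union_left Y ha)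

lemma separates_lowerUncrossing_right (X Y : Finset E) :
    Separates tl hd s Y (lowerUncrossing tl hd s X Y) :=
  separates_edgeFrontier fun _ ha =>
    not_reachableAvoiding_of_separates (separates_self _) (mem_union_right X ha)

lemma lowerUncrossing_inter_upperUncrossing_subset (X Y : Finset E) :
    lowerUncrossing tl hd s X Y ∩ upperUncrossing tl hd s X Y ⊆ X ∩ Y := by
  intro e he
  obtain ⟨heL, heU⟩ := mem_inter.1 he
  have hstart := (mem_edgeFrontier.1 heL).2
  have hnot := (mem_edgeFrontier.1 heU).1
  push Not at hnot
  exact mem_inter.2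
    ⟨mem_of_startsFrom_of_not_reachableAvoiding
        (hstart.mono fun _ => .anti subset_union_left) hnot.1,
      mem_of_startsFrom_of_not_reachableAvoiding
        (hstart.mono fun _ => .anti subset_union_right) hnot.2⟩

/-- Submodularity of cut sizes. -/
lemma card_lowerUncrossing_add_card_upperUncrossing_le (X Y : Finset E) :
    (lowerUncrossing tl hd s X Y).card + (upperUncrossing tl hd s X Y).card ≤ X.card + Y.card :=
  calc _ = (lowerUncrossing tl hd s X Y ∪ upperUncrossing tl hd s X Y).card
          + (lowerUncrossing tl hd s X Y ∩ upperUncrossing tl hd s X Y).card :=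
        (card_union_add_card_inter _ _).symm
    _ ≤ (X ∪ Y).card + (X ∩ Y).card := add_le_add
        (card_le_card (union_subset (edgeFrontier_reachableAvoiding_subset _)
          (upperUncrossing_subset X Y)))
        (card_le_card (lowerUncrossing_inter_upperUncrossing_subset X Y))
    _ = X.card + Y.card := card_union_add_card_inter X Y

lemma exists_isMinCut_separates_of_isMinCut {A A' X Y : Finset E} (hX : IsMinCut tl hd s A X)
    (hY : IsMinCut tl hd s A' Y) (hAY : Separates tl hd s A Y) :
    ∃ D, IsMinCut tl hd s Y D ∧ Separates tl hd s X D := by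
  refine ⟨lowerUncrossing tl hd s X Y, ⟨separates_lowerUncrossing_right X Y, ?_⟩,
    separates_lowerUncrossing_left X Y⟩
  have hU : X.card ≤ (upperUncrossing tl hd s X Y).card :=
    hX.2 ▸ mincut_le_card (hX.1.upperUncrossing hAY)
  have hD : mincut tl hd s Y ≤ (lowerUncrossing tl hd s X Y).card :=
    mincut_le_card (separates_lowerUncrossing_right X Y)
  have hsum :=
    card_lowerUncrossing_add_card_upperUncrossing_le (tl := tl) (hd := hd) (s := s) X Y
  have hYreg : Y.card = mincut tl hd s Y := hY.regular
  omega

end Frontier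

end Cuts

theorem minCut_dominates_minCut_union_general {V E : Type*} [Fintype E] [DecidableEq E]
    (tl hd : E → V) (s : V)
    (A₁ A₂ : Finset E) (h₁ : Regular tl hd s A₁) (h₂ : Regular tl hd s A₂)
    (hdom : Dominates tl hd s A₁ A₂)
    (CUT₁ CUT₁₂ : Finset E)
    (hC₁ : IsMinCut tl hd s A₁ CUT₁)
    (hC₁₂ : IsMinCut tl hd s (A₁ ∪ A₂) CUT₁₂) :
    Dominates tl hd s CUT₁ CUT₁₂ := by
  have hA₂ : A₂.card ≤ CUT₁₂.card := by
    rw [h₂, hC₁₂.2]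
    exact mincut_mono subset_union_right
  refine ⟨by rw [hC₁.2, ← h₁]; exact hdom.1.trans_le hA₂, ?_⟩
  exact exists_isMinCut_separates_of_isMinCut hC₁ hC₁₂ (hC₁₂.1.mono_left subset_union_left)

/-- if `A₁ ≺ A₂`, then for any minimum cut `CUT₁` of `A₁` and any
minimum cut `CUT₁₂` of `A₁ ∪ A₂`, `CUT₁ ≺ CUT₁₂`. -/
theorem minCut_dominates_minCut_union {V E : Type*} [Fintype E] [DecidableEq E]
    (tl hd : E → V) (s : V)
    (hacy : Acyclic tl hd) (hsrc : ∀ e : E, hd e ≠ s)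
    (A₁ A₂ : Finset E) (h₁ : Regular tl hd s A₁) (h₂ : Regular tl hd s A₂)
    (hdom : Dominates tl hd s A₁ A₂)
    (CUT₁ CUT₁₂ : Finset E)
    (hC₁ : IsMinCut tl hd s A₁ CUT₁)
    (hC₁₂ : IsMinCut tl hd s (A₁ ∪ A₂) CUT₁₂) :
    Dominates tl hd s CUT₁ CUT₁₂ :=
  minCut_dominates_minCut_union_general tl hd s A₁ A₂ h₁ h₂ hdom CUT₁ CUT₁₂ hC₁ hC₁₂
end

section
/- Let CUT₁ = {e₁ᵢ : i = 1,…,n} and CUT₂ = {e₂ᵢ : i = 1,…,n} be two minimum cuts between s and t in a finite directed acyclic graph, and let P₁, …, P_n be n edge-disjoint s–t paths with P_i ∩ CUT₁ = {e₁ᵢ} and P_i ∩ CUT₂ = {e₂ᵢ}. Then the edge set {minord(e₁ᵢ, e₂ᵢ) : i = 1,…,n}, where minord picks the upstream of the two edges on P_i, is also a minimum cut between s and t. -/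
open Finset

/-! If an `s`–`t` path `Q` avoided `M = {minord(e₁ i, e₂ i)}`, let `c` be its first edge on
`CUT₁ ∪ CUT₂`, say `c = e₁ i`. Following `Q` up to `c` and then `P i` gives an `s`–`t` path, which
must meet `CUT₂`; it cannot do so before `c`, so it meets `P i` at or after `c`, i.e. `e₁ i ≤ e₂ i`
and `c = minord(e₁ i, e₂ i) ∈ M`. The case `c = e₂ i` is the same with the cuts swapped, acyclicity
ruling out `e₁ i ≤ e₂ i ≤ e₁ i` for distinct edges. Since the paths are edge-disjoint, `M` has
`n` elements. -/

namespace List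

lemma exists_eq_append_cons_of_first_mem {α : Type*} {l : List α} {S : Finset α}
    (h : ∃ x ∈ l, x ∈ S) : ∃ l₁ c l₂, l = l₁ ++ c :: l₂ ∧ c ∈ S ∧ ∀ x ∈ l₁, x ∉ S := by
  classical
  obtain ⟨c, hc⟩ := Option.isSome_iff_exists.1
    (find?_isSome.2 (by simpa using h) : (l.find? (fun x => decide (x ∈ S))).isSome)
  obtain ⟨hcS, l₁, l₂, rfl, hl₁⟩ := find?_eq_some_iff_append.1 hc
  exact ⟨l₁, c, l₂, rfl, by simpa using hcS, by simpa using hl₁⟩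

end List

section Paths

variable {V E : Type*} {tl hd : E → V}

lemma EChain.edgeLe_of_mem {d e : E} {l : List E} (hl : EChain tl hd (d :: l)) (he : e ∈ d :: l) :
    EdgeLe tl hd d e := by
  obtain ⟨i, hi, rfl⟩ := List.getElem_of_mem he
  refine ⟨(d :: l).take (i + 1), hl.take _, by simp, ?_⟩
  rw [List.getLast?_take]
  simp

lemma Acyclic.eq_nil_of_getLast?_eq (hacy : Acyclic tl hd) {d : E} {l : List E}
    (hl : EChain tl hd (d :: l)) (hlast : (d :: l).getLast? = some d) : l = [] := by
  obtain _ | ⟨y, l⟩ := l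
  · rfl
  · exact absurd (List.isChain_cons_cons.1 hl).1
      (hacy (y :: l) (List.cons_ne_nil _ _) hl.tail y rfl d (by simpa using hlast))

lemma Acyclic.edgeLe_antisymm (hacy : Acyclic tl hd) {d e : E}
    (h₁ : EdgeLe tl hd d e) (h₂ : EdgeLe tl hd e d) : d = e := by
  obtain ⟨_ | ⟨d', p⟩, hp, hph, hpl⟩ := h₁
  · simp at hph
  obtain ⟨_ | ⟨e', q⟩, hq, hqh, hql⟩ := h₂
  · simp at hqh
  obtain rfl : d = d' := (Option.some.inj hph).symm
  obtain rfl : e = e' := (Option.some.inj hqh).symm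
  obtain _ | ⟨y, q⟩ := q
  · simpa using hql.symm
  have hcycle : EChain tl hd (d :: (p ++ y :: q)) := by
    rw [← List.cons_append]
    refine hp.append hq.tail fun x hx z hz => ?_
    obtain rfl := Option.some.inj (hpl ▸ hx)
    obtain rfl := Option.some.inj hz
    exact (List.isChain_cons_cons.1 hq).1
  have := hacy.eq_nil_of_getLast?_eq hcycle (by
    rwa [← List.cons_append, List.getLast?_append_cons])
  simp at this

lemma NPathFromTo.splice {s t : V} {l₁ l₂ u v : List E} {c : E}
    (hQ : NPathFromTo tl hd s t (l₁ ++ c :: l₂)) (hp : NPathFromTo tl hd s t (u ++ c :: v)) :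
    NPathFromTo tl hd s t (l₁ ++ c :: v) := by
  obtain ⟨⟨-, hQch, hQs⟩, -⟩ := hQ
  obtain ⟨⟨-, hpch, -⟩, hpt⟩ := hp
  refine ⟨⟨by simp, ?_, ?_⟩, ?_⟩
  · show List.IsChain _ _
    simpa using (hQch.prefix ⟨l₂, by simp⟩).append_overlap (l₂ := [c])
      (hpch.suffix ⟨u, by simp⟩) (List.cons_ne_nil _ _)
  · simpa [List.head?_append] using hQs
  · simpa [List.getLast?_append_cons] using hpt

lemma NSeparates.edgeLe_of_disjoint_prefix {s t : V} {B : Finset E} (hB : NSeparates tl hd s t B)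
    {l₁ l₂ p : List E} {c b : E} (hQ : NPathFromTo tl hd s t (l₁ ++ c :: l₂))
    (hl₁ : ∀ x ∈ l₁, x ∉ B) (hp : NPathFromTo tl hd s t p) (hc : c ∈ p)
    (hpB : ∀ e ∈ p, e ∈ B ↔ e = b) : EdgeLe tl hd c b := by
  obtain ⟨u, v, rfl⟩ := List.append_of_mem hc
  obtain ⟨b', hb'B, hb'⟩ := hB _ (hQ.splice hp)
  have hb'cv : b' ∈ c :: v := by
    rcases List.mem_append.1 hb' with h | h
    · exact absurd hb'B (hl₁ b' h)
    · exact h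
  obtain rfl : b' = b := (hpB b' (by simp [hb'cv])).1 hb'B
  exact EChain.edgeLe_of_mem (hp.1.2.1.suffix ⟨u, by simp⟩) hb'cv

end Paths

lemma EdgeDisjoint.injective {E : Type*} {n : ℕ} {P : Fin n → List E} (hP : EdgeDisjoint P)
    {f : Fin n → E} (hf : ∀ i, f i ∈ P i) : Function.Injective f := by
  intro i j hij
  by_contra hne
  exact hP i j hne (hf i) (hij ▸ hf j)

lemma IsNodeMinCut.exists_eq {V E : Type*} [Fintype E] {tl hd : E → V} {s t : V}
    {C : Finset E} (hC : IsNodeMinCut tl hd s t C) {P : Fin (nmincut tl hd s t) → List E}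
    (hP : EdgeDisjoint P) {f : Fin (nmincut tl hd s t) → E}
    (hf : ∀ i, f i ∈ P i ∧ ∀ e ∈ P i, (e ∈ C ↔ e = f i)) {c : E} (hc : c ∈ C) :
    ∃ i, f i = c := by
  obtain ⟨i, -, hi⟩ := surjOn_of_injOn_of_card_le (s := univ) f
    (fun i _ => ((hf i).2 _ (hf i).1).2 rfl) (hP.injective fun i => (hf i).1).injOn
    (by simp [hC.2]) hc
  exact ⟨i, hi⟩

theorem minord_minCut_general {V E : Type*} [Fintype E] [DecidableEq E]
    (tl hd : E → V) (s t : V)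
    (hacy : Acyclic tl hd)
    (CUT₁ CUT₂ : Finset E)
    (h₁ : IsNodeMinCut tl hd s t CUT₁) (h₂ : IsNodeMinCut tl hd s t CUT₂)
    (P : Fin (nmincut tl hd s t) → List E)
    (hP : ∀ i, NPathFromTo tl hd s t (P i)) (hdisj : EdgeDisjoint P)
    (e₁ e₂ : Fin (nmincut tl hd s t) → E)
    (he₁ : ∀ i, e₁ i ∈ P i ∧ ∀ e ∈ P i, (e ∈ CUT₁ ↔ e = e₁ i))
    (he₂ : ∀ i, e₂ i ∈ P i ∧ ∀ e ∈ P i, (e ∈ CUT₂ ↔ e = e₂ i))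
    (m : Fin (nmincut tl hd s t) → E)
    (hm : ∀ i, (EdgeLe tl hd (e₁ i) (e₂ i) ∧ m i = e₁ i) ∨
               (¬ EdgeLe tl hd (e₁ i) (e₂ i) ∧ m i = e₂ i)) :
    IsNodeMinCut tl hd s t (Finset.image m Finset.univ) := by
  have hmP : ∀ i, m i ∈ P i := fun i => by
    rcases hm i with ⟨-, h⟩ | ⟨-, h⟩ <;> rw [h]
    exacts [(he₁ i).1, (he₂ i).1]
  refine ⟨fun Q hQ => ?_, by simp [card_image_of_injective _ (hdisj.injective hmP)]⟩
  by_contra! hQm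
  obtain ⟨l₁, c, l₂, rfl, hc, hl₁⟩ :=
    List.exists_eq_append_cons_of_first_mem (S := CUT₁ ∪ CUT₂) (by
      obtain ⟨b, hb, hbQ⟩ := h₁.1 Q hQ
      exact ⟨b, hbQ, mem_union_left _ hb⟩)
  have hl₁ : ∀ x ∈ l₁, x ∉ CUT₁ ∧ x ∉ CUT₂ := fun x hx => by simpa using hl₁ x hx
  have hcM : ∃ i, m i = c := by
    rcases mem_union.1 hc with hc | hc
    · obtain ⟨i, rfl⟩ := h₁.exists_eq hdisj he₁ hc
      have hle := h₂.1.edgeLe_of_disjoint_prefix hQ (fun x hx => (hl₁ x hx).2) (hP i) (he₁ i).1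
        (he₂ i).2
      refine ⟨i, ?_⟩
      rcases hm i with ⟨-, h⟩ | ⟨h, -⟩
      exacts [h, absurd hle h]
    · obtain ⟨i, rfl⟩ := h₂.exists_eq hdisj he₂ hc
      have hle := h₁.1.edgeLe_of_disjoint_prefix hQ (fun x hx => (hl₁ x hx).1) (hP i) (he₂ i).1
        (he₁ i).2
      refine ⟨i, ?_⟩
      rcases hm i with ⟨h, h'⟩ | ⟨-, h⟩
      exacts [h'.trans (hacy.edgeLe_antisymm h hle), h]
  obtain ⟨i, hi⟩ := hcM
  exact hQm (m i) (mem_image_of_mem _ (mem_univ i)) (by simp [hi])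

/-- given two minimum cuts between `s` and `t` intersecting `n`
edge-disjoint `s`–`t` paths in edges `e₁ᵢ`, `e₂ᵢ`, the edge set
`{minord(e₁ᵢ, e₂ᵢ) : i}` (picking the upstream of the two on each path) is also
a minimum cut between `s` and `t`. -/
theorem minord_minCut {V E : Type*} [Fintype E] [DecidableEq E]
    (tl hd : E → V) (s t : V)
    (hacy : Acyclic tl hd) (hsrc : ∀ e : E, hd e ≠ s) (hts : t ≠ s)
    (CUT₁ CUT₂ : Finset E)
    (h₁ : IsNodeMinCut tl hd s t CUT₁) (h₂ : IsNodeMinCut tl hd s t CUT₂)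
    (P : Fin (nmincut tl hd s t) → List E)
    (hP : ∀ i, NPathFromTo tl hd s t (P i)) (hdisj : EdgeDisjoint P)
    (e₁ e₂ : Fin (nmincut tl hd s t) → E)
    (he₁ : ∀ i, e₁ i ∈ P i ∧ ∀ e ∈ P i, (e ∈ CUT₁ ↔ e = e₁ i))
    (he₂ : ∀ i, e₂ i ∈ P i ∧ ∀ e ∈ P i, (e ∈ CUT₂ ↔ e = e₂ i))
    (m : Fin (nmincut tl hd s t) → E)
    (hm : ∀ i, (EdgeLe tl hd (e₁ i) (e₂ i) ∧ m i = e₁ i) ∨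
               (¬ EdgeLe tl hd (e₁ i) (e₂ i) ∧ m i = e₂ i)) :
    IsNodeMinCut tl hd s t (Finset.image m Finset.univ) :=
  minord_minCut_general tl hd s t hacy CUT₁ CUT₂ h₁ h₂ P hP hdisj e₁ e₂ he₁ he₂ m hm
end
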